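/- arXiv:1508.03807 — 3 statements merged into one kernel-verified Lean document; each statement's English description precedes it below -/
import Mathlib

section
/- An algebra A is abelian (satisfies the term condition) if and only if the diagonal {(a, a) : a ∈ A} is a class of the congruence of A × A generated by the set of all pairs ((a,a),(b,b)). -/
/-- An algebraic signature: a set of operation symbols with arities. -/
structure Signature where
  ops : Type
  arity : ops → ℕ

/-- An algebra for a signature. -/
structure Alg (σ : Signature) where
  carrier : Type
  interp : (f : σ.ops) → (Fin (σ.arity f) → carrier) → carrier

/-- Terms over a signature with variables from `V`. -/
inductive Term (σ : Signature) (V : Type) : Type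
  | var : V → Term σ V
  | op : (f : σ.ops) → (Fin (σ.arity f) → Term σ V) → Term σ V

/-- Evaluation of a term in an algebra under an environment. -/
def Alg.eval {σ : Signature} (A : Alg σ) {V : Type} (env : V → A.carrier) :
    Term σ V → A.carrier
  | .var v => env v
  | .op f ts => A.interp f (fun i => A.eval env (ts i))

/-- The term condition: `A` is abelian. -/
def IsAbelian {σ : Signature} (A : Alg σ) : Prop :=
  ∀ (m k : ℕ) (t : Term σ (Fin m ⊕ Fin k))
    (a b : Fin m → A.carrier) (u v : Fin k → A.carrier),
    A.eval (Sum.elim a u) t = A.eval (Sum.elim a v) t →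
    A.eval (Sum.elim b u) t = A.eval (Sum.elim b v) t

/-- A congruence of an algebra: an equivalence relation compatible with all operations. -/
def IsCongruence {σ : Signature} (A : Alg σ) (c : A.carrier → A.carrier → Prop) : Prop :=
  Equivalence c ∧ ∀ (f : σ.ops) (x y : Fin (σ.arity f) → A.carrier),
    (∀ i, c (x i) (y i)) → c (A.interp f x) (A.interp f y)

/-- Homomorphisms of algebras. -/
structure Hom {σ : Signature} (A B : Alg σ) where
  toFun : A.carrier → B.carrier
  map : ∀ (f : σ.ops) (x : Fin (σ.arity f) → A.carrier),
    toFun (A.interp f x) = B.interp f (toFun ∘ x)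

/-- A subset closed under all operations (a subuniverse). -/
def ClosedUnder {σ : Signature} (A : Alg σ) (S : Set A.carrier) : Prop :=
  ∀ (f : σ.ops) (x : Fin (σ.arity f) → A.carrier), (∀ i, x i ∈ S) → A.interp f x ∈ S

/-- `X` generates `A`: the only subuniverse containing `X` is the whole carrier. -/
def Generates {σ : Signature} (A : Alg σ) (X : Set A.carrier) : Prop :=
  ∀ S : Set A.carrier, ClosedUnder A S → X ⊆ S → S = Set.univ

/-- The subalgebra supported by a closed subset. -/
def subAlg {σ : Signature} (A : Alg σ) (S : Set A.carrier) (hS : ClosedUnder A S) :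
    Alg σ :=
  ⟨S, fun f x => ⟨A.interp f (fun i => (x i).1), hS f _ (fun i => (x i).2)⟩⟩

/-- The power algebra `A^I`. -/
def powAlg {σ : Signature} (A : Alg σ) (I : Type) : Alg σ :=
  ⟨I → A.carrier, fun f x i => A.interp f (fun j => x j i)⟩

/-- The product of a family of algebras. -/
def prodAlg {σ : Signature} {I : Type} (A : I → Alg σ) : Alg σ :=
  ⟨∀ i, (A i).carrier, fun f x i => (A i).interp f (fun j => x j i)⟩

/-- `B` lies in the variety generated by `A` (HSP): `B` is a homomorphic image
of a subalgebra of a power of `A`. -/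
def InVarietyOf {σ : Signature} (A B : Alg σ) : Prop :=
  ∃ (I : Type) (S : Set (powAlg A I).carrier) (hS : ClosedUnder (powAlg A I) S)
    (h : Hom (subAlg (powAlg A I) S hS) B), Function.Surjective h.toFun

/-- A class of algebras closed under homomorphic images, subalgebras and products. -/
def IsVariety {σ : Signature} (K : Alg σ → Prop) : Prop :=
  (∀ A B : Alg σ, K A → (∃ h : Hom A B, Function.Surjective h.toFun) → K B) ∧
  (∀ (A : Alg σ) (S : Set A.carrier) (hS : ClosedUnder A S), K A → K (subAlg A S hS)) ∧
  (∀ (I : Type) (A : I → Alg σ), (∀ i, K (A i)) → K (prodAlg A))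

/-- `F` is free in the class `K` over the set `X` with insertion `ι`. -/
def IsFreeOn {σ : Signature} (K : Alg σ → Prop) (F : Alg σ)
    (X : Type) (ι : X → F.carrier) : Prop :=
  K F ∧ ∀ B : Alg σ, K B → ∀ g : X → B.carrier,
    ∃! h : Hom F B, ∀ x, h.toFun (ι x) = g x

/-- A simple algebra: nontrivial, with only the two trivial congruences. -/
def SimpleAlg {σ : Signature} (B : Alg σ) : Prop :=
  (∃ x y : B.carrier, x ≠ y) ∧
  ∀ c, IsCongruence B c → (∀ x y, c x y ↔ x = y) ∨ (∀ x y : B.carrier, c x y)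

/-- The square `A × A` of an algebra. -/
def sqAlg {σ : Signature} (A : Alg σ) : Alg σ :=
  ⟨A.carrier × A.carrier,
    fun f x => (A.interp f (fun i => (x i).1), A.interp f (fun i => (x i).2))⟩

/-- The congruence generated by a binary relation `r` on an algebra `B`:
the intersection of all congruences containing `r`. -/
def congGen {σ : Signature} (B : Alg σ) (r : B.carrier → B.carrier → Prop)
    (x y : B.carrier) : Prop :=
  ∀ c, IsCongruence B c → (∀ a b, r a b → c a b) → c x y

/-- Map on term variables. -/
def Term.tmap {σ : Signature} {V W : Type} (g : V → W) : Term σ V → Term σ W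
  | .var v => .var (g v)
  | .op f ts => .op f (fun i => Term.tmap g (ts i))

theorem eval_tmap {σ : Signature} (A : Alg σ) {V W : Type} (g : V → W)
    (env : W → A.carrier) (t : Term σ V) :
    A.eval env (Term.tmap g t) = A.eval (env ∘ g) t := by
  induction t with
  | var v => rfl
  | op f ts ih => simp [Term.tmap, Alg.eval, ih]

/-- Term evaluation respects congruences. -/
theorem eval_congr {σ : Signature} (A : Alg σ) {V : Type}
    {c : A.carrier → A.carrier → Prop} (hc : IsCongruence A c)
    (e1 e2 : V → A.carrier) (h : ∀ v, c (e1 v) (e2 v)) (t : Term σ V) :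
    c (A.eval e1 t) (A.eval e2 t) := by
  induction t with
  | var v => exact h v
  | op f ts ih => exact hc.2 f _ _ (fun i => ih i)

theorem sq_eval {σ : Signature} (A : Alg σ) {V : Type}
    (env : V → (sqAlg A).carrier) (t : Term σ V) :
    (sqAlg A).eval env t =
      (A.eval (fun v => (env v).1) t, A.eval (fun v => (env v).2) t) := by
  induction t with
  | var v => rfl
  | op f ts ih =>
    show ((A.interp f fun i => ((sqAlg A).eval env (ts i)).1),
          (A.interp f fun i => ((sqAlg A).eval env (ts i)).2)) = _
    simp only [ih]
    rfl

/-- The Mal'cev relation on `A × A`. -/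
def MRel {σ : Signature} (A : Alg σ) (p q : (sqAlg A).carrier) : Prop :=
  ∃ (m k : ℕ) (t : Term σ (Fin m ⊕ Fin k)) (a b : Fin m → A.carrier)
    (u v : Fin k → A.carrier),
    p = (A.eval (Sum.elim a u) t, A.eval (Sum.elim a v) t) ∧
    q = (A.eval (Sum.elim b u) t, A.eval (Sum.elim b v) t)

theorem MRel.refl {σ : Signature} (A : Alg σ) (p : (sqAlg A).carrier) : MRel A p p := by
  refine ⟨0, 1, .var (.inr 0), Fin.elim0, Fin.elim0, fun _ => p.1, fun _ => p.2, ?_, ?_⟩ <;>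
    (simp [Alg.eval]; rfl)

theorem MRel.symm {σ : Signature} (A : Alg σ) {p q : (sqAlg A).carrier}
    (h : MRel A p q) : MRel A q p := by
  obtain ⟨m, k, t, a, b, u, v, hp, hq⟩ := h
  exact ⟨m, k, t, b, a, u, v, hq, hp⟩

theorem MRel.compat {σ : Signature} (A : Alg σ) (f : σ.ops)
    (x y : Fin (σ.arity f) → (sqAlg A).carrier) (h : ∀ i, MRel A (x i) (y i)) :
    MRel A ((sqAlg A).interp f x) ((sqAlg A).interp f y) := by
  choose m k t a b u v hx hy using h
  set M := Fintype.card (Σ i : Fin (σ.arity f), Fin (m i)) with hM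
  set K := Fintype.card (Σ i : Fin (σ.arity f), Fin (k i)) with hK
  let eM : (Σ i : Fin (σ.arity f), Fin (m i)) ≃ Fin M := Fintype.equivFin _
  let eK : (Σ i : Fin (σ.arity f), Fin (k i)) ≃ Fin K := Fintype.equivFin _
  let g : ∀ i : Fin (σ.arity f), (Fin (m i) ⊕ Fin (k i)) → (Fin M ⊕ Fin K) :=
    fun i => Sum.map (fun j => eM ⟨i, j⟩) (fun j => eK ⟨i, j⟩)
  have hcomp : ∀ (i : Fin (σ.arity f)) (P : ∀ j, Fin (m j) → A.carrier)
      (Q : ∀ j, Fin (k j) → A.carrier),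
      (Sum.elim (fun s => P (eM.symm s).1 (eM.symm s).2)
        (fun s => Q (eK.symm s).1 (eK.symm s).2)) ∘ g i = Sum.elim (P i) (Q i) := by
    intro i P Q
    funext z
    cases z with
    | inl j =>
      exact congrArg (fun s : Σ j, Fin (m j) => P s.1 s.2) (eM.symm_apply_apply ⟨i, j⟩)
    | inr j =>
      exact congrArg (fun s : Σ j, Fin (k j) => Q s.1 s.2) (eK.symm_apply_apply ⟨i, j⟩)
  refine ⟨M, K, .op f (fun i => Term.tmap (g i) (t i)),
    fun s => a (eM.symm s).1 (eM.symm s).2, fun s => b (eM.symm s).1 (eM.symm s).2,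
    fun s => u (eK.symm s).1 (eK.symm s).2, fun s => v (eK.symm s).1 (eK.symm s).2,
    ?_, ?_⟩
  · show ((A.interp f fun i => (x i).1), (A.interp f fun i => (x i).2)) = _
    simp only [Alg.eval, eval_tmap, hcomp]
    refine Prod.ext ?_ ?_ <;> (simp only; congr 1; funext i; rw [hx i])
  · show ((A.interp f fun i => (y i).1), (A.interp f fun i => (y i).2)) = _
    simp only [Alg.eval, eval_tmap, hcomp]
    refine Prod.ext ?_ ?_ <;> (simp only; congr 1; funext i; rw [hy i])

theorem MRel.closure_congruence {σ : Signature} (A : Alg σ) :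
    IsCongruence (sqAlg A) (Relation.ReflTransGen (MRel A)) := by
  constructor
  · refine ⟨fun _ => Relation.ReflTransGen.refl, ?_, fun h1 h2 => h1.trans h2⟩
    intro p q h
    haveI : Std.Symm (MRel A) := ⟨fun _ _ => MRel.symm A⟩
    exact Relation.ReflTransGen.symmetric.symm _ _ h
  · intro f x y h
    have key : ∀ (w : Fin (σ.arity f) → (sqAlg A).carrier) (i : Fin (σ.arity f))
        (z z' : (sqAlg A).carrier), Relation.ReflTransGen (MRel A) z z' →
        Relation.ReflTransGen (MRel A)
          ((sqAlg A).interp f (Function.update w i z))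
          ((sqAlg A).interp f (Function.update w i z')) := by
      intro w i z z' hz
      refine Relation.ReflTransGen.lift (fun z => (sqAlg A).interp f (Function.update w i z))
        ?_ _ _ hz
      intro c d hcd
      apply MRel.compat A f (Function.update w i c) (Function.update w i d)
      intro j
      rcases eq_or_ne j i with rfl | hne
      · simpa using hcd
      · rw [Function.update_of_ne hne, Function.update_of_ne hne]
        exact MRel.refl A _
    have main : ∀ n : ℕ, n ≤ σ.arity f →
        Relation.ReflTransGen (MRel A) ((sqAlg A).interp f x)
          ((sqAlg A).interp f (fun i : Fin (σ.arity f) =>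
            if (i : ℕ) < n then y i else x i)) := by
      intro n
      induction n with
      | zero =>
        intro _
        have hx0 : (fun i : Fin (σ.arity f) => if (i : ℕ) < 0 then y i else x i) = x := by
          funext i; simp
        rw [hx0]
      | succ n ih =>
        intro hn
        have hn' : n < σ.arity f := hn
        refine (ih (le_of_lt hn')).trans ?_
        set w : Fin (σ.arity f) → (sqAlg A).carrier :=
          fun i : Fin (σ.arity f) => if (i : ℕ) < n then y i else x i with hw
        have h1 : (fun i : Fin (σ.arity f) => if (i : ℕ) < n then y i else x i) =
            Function.update w ⟨n, hn'⟩ (x ⟨n, hn'⟩) := by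
          funext i
          rcases eq_or_ne i ⟨n, hn'⟩ with rfl | hne
          · simp [hw]
          · rw [Function.update_of_ne hne]
        have h2 : (fun i : Fin (σ.arity f) => if (i : ℕ) < n + 1 then y i else x i) =
            Function.update w ⟨n, hn'⟩ (y ⟨n, hn'⟩) := by
          funext i
          rcases eq_or_ne i ⟨n, hn'⟩ with rfl | hne
          · simp
          · have hni : (i : ℕ) ≠ n := fun hh => hne (Fin.ext hh)
            rw [Function.update_of_ne hne, hw]
            simp only
            rcases Nat.lt_or_ge (i : ℕ) n with hlt | hge
            · simp [hlt, Nat.lt_succ_of_lt hlt]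
            · have h3 : ¬ (i : ℕ) < n := Nat.not_lt.mpr hge
              have h4 : ¬ (i : ℕ) < n + 1 := by omega
              simp [h3, h4]
        have h1' : w = Function.update w ⟨n, hn'⟩ (x ⟨n, hn'⟩) := hw.trans h1
        rw [h2]
        conv_lhs => rw [h1']
        exact key w ⟨n, hn'⟩ _ _ (h ⟨n, hn'⟩)
    have hfin := main (σ.arity f) le_rfl
    have hy' : (fun i : Fin (σ.arity f) => if (i : ℕ) < σ.arity f then y i else x i) = y := by
      funext i; simp [i.isLt]
    rwa [hy'] at hfin

theorem stmt_6 {σ : Signature} (A : Alg σ) :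
    IsAbelian A ↔
      ∀ (a : A.carrier) (p : A.carrier × A.carrier),
        congGen (sqAlg A) (fun u v => u.1 = u.2 ∧ v.1 = v.2) (a, a) p → p.1 = p.2 := by
  constructor
  · -- abelian → diagonal is a Δ-class
    intro hab a p hp
    have gen : ∀ u v : (sqAlg A).carrier, (u.1 = u.2 ∧ v.1 = v.2) →
        Relation.ReflTransGen (MRel A) u v := by
      rintro ⟨u1, u2⟩ ⟨v1, v2⟩ ⟨h1, h2⟩
      simp only at h1 h2
      subst h1; subst h2
      exact Relation.ReflTransGen.single
        ⟨1, 0, .var (.inl 0), fun _ => u1, fun _ => v1, Fin.elim0, Fin.elim0,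
          by simp [Alg.eval]; rfl, by simp [Alg.eval]; rfl⟩
    have hc := hp _ (MRel.closure_congruence A) gen
    have step : ∀ {q r : (sqAlg A).carrier}, MRel A q r → q.1 = q.2 → r.1 = r.2 := by
      rintro q r ⟨m, k, t, aa, bb, uu, vv, hq, hr⟩ hd
      subst hq; subst hr
      simp only at hd ⊢
      exact hab m k t aa bb uu vv hd
    clear hp gen
    induction hc with
    | refl => rfl
    | tail _ hbc ih => exact step hbc ih
  · -- Δ-class condition → abelian
    intro H m k t a b u v h1
    set env1 : (Fin m ⊕ Fin k) → (sqAlg A).carrier :=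
      Sum.elim (fun i => (a i, a i)) (fun j => (u j, v j)) with henv1
    set env2 : (Fin m ⊕ Fin k) → (sqAlg A).carrier :=
      Sum.elim (fun i => (b i, b i)) (fun j => (u j, v j)) with henv2
    have key : congGen (sqAlg A) (fun u v => u.1 = u.2 ∧ v.1 = v.2)
        ((sqAlg A).eval env1 t) ((sqAlg A).eval env2 t) := by
      intro c hc hr
      refine eval_congr (sqAlg A) hc env1 env2 (fun z => ?_) t
      cases z with
      | inl i => exact hr _ _ ⟨rfl, rfl⟩
      | inr j => exact hc.1.refl _
    rw [sq_eval, sq_eval] at key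
    have e1 : (fun z => (env1 z).1) = Sum.elim a u := funext fun z => by cases z <;> rfl
    have e2 : (fun z => (env1 z).2) = Sum.elim a v := funext fun z => by cases z <;> rfl
    have e3 : (fun z => (env2 z).1) = Sum.elim b u := funext fun z => by cases z <;> rfl
    have e4 : (fun z => (env2 z).2) = Sum.elim b v := funext fun z => by cases z <;> rfl
    rw [e1, e2, e3, e4, h1] at key
    exact H _ _ key
end

section
/- Every nontrivial variety has a finitely generated simple member. Concretely, in the language of Lean/mathlib: for every nontrivial algebra A (in any algebraic signature), the variety generated by A contains a finitely generated algebra with exactly two congruences. -/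
section MagariAux

variable {σ : Signature}

/-- Substitution of terms for variables. -/
def tsubst {σ : Signature} {V W : Type} (τ : V → Term σ W) : Term σ V → Term σ W
  | .var v => τ v
  | .op f ts => .op f (fun i => tsubst τ (ts i))

lemma tsubst_var {V : Type} (t : Term σ V) : tsubst Term.var t = t := by
  induction t with
  | var v => rfl
  | op f ts ih => exact congrArg (Term.op f) (funext fun i => ih i)

lemma tsubst_tsubst {U V W : Type} (τ : U → Term σ V) (ρ : V → Term σ W) (t : Term σ U) :
    tsubst ρ (tsubst τ t) = tsubst (fun u => tsubst ρ (τ u)) t := by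
  induction t with
  | var v => rfl
  | op f ts ih => exact congrArg (Term.op f) (funext fun i => ih i)

lemma eval_tsubst (X : Alg σ) {V W : Type} (τ : V → Term σ W) (ν : W → X.carrier)
    (t : Term σ V) :
    X.eval ν (tsubst τ t) = X.eval (fun v => X.eval ν (τ v)) t := by
  induction t with
  | var v => rfl
  | op f ts ih => exact congrArg (X.interp f) (funext fun i => ih i)

lemma eval_pow {σ : Signature} (A : Alg σ) {I V : Type} (ν : V → (I → A.carrier))
    (t : Term σ V) (i : I) :
    (powAlg A I).eval ν t i = A.eval (fun v => ν v i) t := by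
  induction t with
  | var v => rfl
  | op f ts ih =>
    show A.interp f (fun j => (powAlg A I).eval ν (ts j) i) = _
    exact congrArg (A.interp f) (funext fun j => ih j)

/-- The signature extended by one constant. -/
def sigC (σ : Signature) : Signature := ⟨σ.ops ⊕ Unit, Sum.elim σ.arity (fun _ => 0)⟩

/-- Extend an algebra to the extended signature by interpreting the constant as `a0`. -/
def extAlg (A : Alg σ) (a0 : A.carrier) : Alg (sigC σ) :=
  ⟨A.carrier, fun f => match f with
    | .inl g => A.interp g
    | .inr _ => fun _ => a0⟩

/-- The reduct of a `sigC σ` algebra to `σ`. -/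
def redAlg (X : Alg (sigC σ)) : Alg σ := ⟨X.carrier, fun f => X.interp (Sum.inl f)⟩

/-- Embed σ-terms into sigC σ-terms. -/
def upTerm {V : Type} : Term σ V → Term (sigC σ) V
  | .var v => .var v
  | .op f ts => .op (Sum.inl f) (fun i => upTerm (ts i))

lemma eval_upTerm (X : Alg (sigC σ)) {V : Type} (ν : V → X.carrier) (t : Term σ V) :
    X.eval ν (upTerm t) = (redAlg X).eval ν t := by
  induction t with
  | var v => rfl
  | op f ts ih => exact congrArg (X.interp (Sum.inl f)) (funext fun i => ih i)

lemma redAlg_extAlg (A : Alg σ) (a0 : A.carrier) : redAlg (extAlg A a0) = A := rfl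

/-- Terms in two variables over the extended signature. -/
abbrev TT (σ : Signature) : Type := Term (sigC σ) (Fin 2)

/-- The constant as a term. -/
def cT : TT σ := Term.op (Sum.inr ()) (fun i => i.elim0)

lemma fin_sigC_inr (u : Unit) (i : Fin ((sigC σ).arity (Sum.inr u))) : False := by
  have := i.2; simp [sigC] at this

lemma inr_ops_ext {u : Unit} (a b : Fin ((sigC σ).arity (Sum.inr u)) → TT σ) : a = b :=
  funext fun i => (fin_sigC_inr u i).elim

lemma tsubst_cT (τ : Fin 2 → TT σ) : tsubst τ (cT : TT σ) = cT := by
  simp only [cT, tsubst]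
  exact congrArg _ (inr_ops_ext _ _)

lemma op_inr_eq_cT (u : Unit) (ts : Fin ((sigC σ).arity (Sum.inr u)) → TT σ) :
    Term.op (Sum.inr u) ts = cT := by
  exact congrArg _ (inr_ops_ext _ _)

lemma tsubst_absorb (τ : Fin 2 → TT σ) (w : TT σ) :
    tsubst τ (tsubst (fun _ => (cT : TT σ)) w) = tsubst (fun _ => (cT : TT σ)) w := by
  rw [tsubst_tsubst]
  exact congrFun (congrArg tsubst (funext fun _ => tsubst_cT τ)) w

/-- Congruences on the term algebra, as sets of pairs. -/
def IsCon (σ : Signature) (E : Set (TT σ × TT σ)) : Prop :=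
  (∀ u, (u, u) ∈ E) ∧ (∀ u v, (u, v) ∈ E → (v, u) ∈ E) ∧
  (∀ u v w, (u, v) ∈ E → (v, w) ∈ E → (u, w) ∈ E) ∧
  (∀ (f : (sigC σ).ops) (x y : Fin ((sigC σ).arity f) → TT σ),
    (∀ i, (x i, y i) ∈ E) → (Term.op f x, Term.op f y) ∈ E)

/-- Fully invariant congruences (equational theories). -/
def IsThy (σ : Signature) (E : Set (TT σ × TT σ)) : Prop :=
  IsCon σ E ∧ ∀ (τ : Fin 2 → TT σ) (u v), (u, v) ∈ E → (tsubst τ u, tsubst τ v) ∈ E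

lemma tsubst_rel {E : Set (TT σ × TT σ)} (hE : IsCon σ E) {τ₁ τ₂ : Fin 2 → TT σ}
    (h : ∀ i, (τ₁ i, τ₂ i) ∈ E) :
    ∀ t : TT σ, (tsubst τ₁ t, tsubst τ₂ t) ∈ E := by
  intro t
  induction t with
  | var v => exact h v
  | op f ts ih => exact hE.2.2.2 f _ _ ih

lemma chain_pair {α : Type*} {c : Set (Set α)} (hc : IsChain (· ⊆ ·) c) {E₁ E₂ : Set α}
    (h1 : E₁ ∈ c) (h2 : E₂ ∈ c) : ∃ E ∈ c, E₁ ⊆ E ∧ E₂ ⊆ E := by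
  rcases eq_or_ne E₁ E₂ with rfl | hne
  · exact ⟨E₁, h1, subset_rfl, subset_rfl⟩
  · rcases hc h1 h2 hne with h | h
    · exact ⟨E₂, h2, h, subset_rfl⟩
    · exact ⟨E₁, h1, subset_rfl, h⟩

lemma chain_fin {α : Type*} {c : Set (Set α)} (hc : IsChain (· ⊆ ·) c) (hne : c.Nonempty) :
    ∀ {n : ℕ} (g : Fin n → Set α), (∀ i, g i ∈ c) → ∃ E ∈ c, ∀ i, g i ⊆ E := by
  intro n
  induction n with
  | zero =>
    intro g _
    obtain ⟨E, hE⟩ := hne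
    exact ⟨E, hE, fun i => i.elim0⟩
  | succ m ih =>
    intro g hg
    obtain ⟨E, hE, hsub⟩ := ih (fun i => g i.succ) (fun i => hg _)
    obtain ⟨E', hE', h1, h2⟩ := chain_pair hc hE (hg 0)
    refine ⟨E', hE', fun i => ?_⟩
    refine Fin.cases h2 (fun j => (hsub j).trans h1) i

end MagariAux

section MagariAux2

variable {σ : Signature}

def conSetoid {Θ : Set (TT σ × TT σ)} (hΘ : IsCon σ Θ) : Setoid (TT σ) :=
  ⟨fun u v => (u, v) ∈ Θ,
    ⟨fun u => hΘ.1 u, fun h => hΘ.2.1 _ _ h, fun h h' => hΘ.2.2.1 _ _ _ h h'⟩⟩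

/-- Quotient of the term algebra by a congruence. -/
noncomputable def QAlg {Θ : Set (TT σ × TT σ)} (hΘ : IsCon σ Θ) : Alg (sigC σ) :=
  ⟨Quotient (conSetoid hΘ),
   fun f x => Quotient.mk (conSetoid hΘ) (Term.op f (fun i => (x i).out))⟩

lemma qmk_op {Θ : Set (TT σ × TT σ)} (hΘ : IsCon σ Θ) (f : (sigC σ).ops)
    (u : Fin ((sigC σ).arity f) → TT σ) :
    (QAlg hΘ).interp f (fun i => Quotient.mk (conSetoid hΘ) (u i)) =
      Quotient.mk (conSetoid hΘ) (Term.op f u) := by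
  apply Quotient.sound
  refine hΘ.2.2.2 f _ _ (fun i => ?_)
  exact Quotient.exact (Quotient.out_eq (Quotient.mk (conSetoid hΘ) (u i)))

lemma qalg_eval {Θ : Set (TT σ × TT σ)} (hΘ : IsCon σ Θ) {V : Type} (τ : V → TT σ)
    (t : Term (sigC σ) V) :
    (QAlg hΘ).eval (fun v => Quotient.mk (conSetoid hΘ) (τ v)) t =
      Quotient.mk (conSetoid hΘ) (tsubst τ t) := by
  induction t with
  | var v => rfl
  | op f ts ih =>
    show (QAlg hΘ).interp f (fun i => (QAlg hΘ).eval _ (ts i)) = _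
    rw [funext ih]
    exact qmk_op hΘ f _

/-- Birkhoff-style lemma: an algebra satisfying all identities of `A`
    (witnessed at the identity valuation) lies in the variety of `A`. -/
lemma inVariety_of_ids {σ : Signature} (A B : Alg σ)
    (h : ∀ s t : Term σ B.carrier,
      (∀ φ : B.carrier → A.carrier, A.eval φ s = A.eval φ t) →
      B.eval (fun b => b) s = B.eval (fun b => b) t) :
    InVarietyOf A B := by
  classical
  let I := B.carrier → A.carrier
  let pr : B.carrier → (powAlg A I).carrier := fun b φ => φ b
  let S : Set ((powAlg A I).carrier) :=
    {v | ∃ t : Term σ B.carrier, (powAlg A I).eval pr t = v}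
  have hS : ClosedUnder (powAlg A I) S := by
    intro f x hx
    choose ts hts using hx
    refine ⟨Term.op f ts, ?_⟩
    show (powAlg A I).interp f (fun i => (powAlg A I).eval pr (ts i)) = _
    exact congrArg _ (funext hts)
  have wd : ∀ t t' : Term σ B.carrier,
      (powAlg A I).eval pr t = (powAlg A I).eval pr t' →
      B.eval (fun b => b) t = B.eval (fun b => b) t' := by
    intro t t' he
    apply h
    intro φ
    have h2 := congrFun he φ
    rw [eval_pow, eval_pow] at h2
    exact h2
  refine ⟨I, S, hS, ⟨fun v => B.eval (fun b => b) (Classical.choose v.2), ?_⟩, ?_⟩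
  · intro f x
    have hx : ∀ i, (powAlg A I).eval pr (Classical.choose (x i).2) = (x i).1 :=
      fun i => Classical.choose_spec (x i).2
    have hnew : (powAlg A I).eval pr
        (Classical.choose ((subAlg (powAlg A I) S hS).interp f x).2) =
        (powAlg A I).interp f (fun i => (x i).1) :=
      Classical.choose_spec ((subAlg (powAlg A I) S hS).interp f x).2
    have hop : (powAlg A I).eval pr (Term.op f (fun i => Classical.choose (x i).2)) =
        (powAlg A I).interp f (fun i => (x i).1) := by
      show (powAlg A I).interp f _ = _
      exact congrArg _ (funext hx)
    have := wd _ _ (hnew.trans hop.symm)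
    show B.eval (fun b => b) _ = _
    rw [this]
    show B.interp f _ = _
    rfl
  · intro b
    have hex : pr b ∈ S := ⟨Term.var b, rfl⟩
    refine ⟨⟨pr b, hex⟩, ?_⟩
    show B.eval (fun b => b) (Classical.choose hex) = b
    have hsp : (powAlg A I).eval pr (Classical.choose hex) = pr b :=
      Classical.choose_spec hex
    exact wd _ (Term.var b) hsp

end MagariAux2

/-- Magari: for every nontrivial algebra `A`, the variety generated
by `A` contains a finitely generated algebra with exactly two congruences
(equality and the full relation), i.e. a finitely generated simple member. -/
theorem stmt_7 {σ : Signature} (A : Alg σ) (hnt : ∃ a b : A.carrier, a ≠ b) :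
    ∃ B : Alg σ, InVarietyOf A B ∧
      (∃ X : Set B.carrier, X.Finite ∧ Generates B X) ∧
      (∃ x y : B.carrier, x ≠ y) ∧
      (∀ c, IsCongruence B c →
        (∀ x y, c x y ↔ x = y) ∨ (∀ x y : B.carrier, c x y)) := by
  classical
  obtain ⟨a0, b0, hab⟩ := hnt
  set A' : Alg (sigC σ) := extAlg A a0 with hA'
  -- identities of A' in two variables
  set IdA : Set (TT σ × TT σ) :=
    {p | ∀ ν : Fin 2 → A.carrier, A'.eval ν p.1 = A'.eval ν p.2} with hIdA
  have hIdCon : IsCon σ IdA := by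
    refine ⟨fun u ν => rfl, fun u v h ν => (h ν).symm,
      fun u v w h h' ν => (h ν).trans (h' ν), ?_⟩
    intro f x y hxy ν
    show A'.interp f _ = A'.interp f _
    exact congrArg _ (funext fun i => hxy i ν)
  have hIdThy : IsThy σ IdA := by
    refine ⟨hIdCon, ?_⟩
    intro τ u v h ν
    show A'.eval ν (tsubst τ u) = A'.eval ν (tsubst τ v)
    exact (eval_tsubst A' τ ν u).trans ((h _).trans (eval_tsubst A' τ ν v).symm)
  have hIdcons : ((Term.var 0 : TT σ), (Term.var 1 : TT σ)) ∉ IdA := by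
    intro h
    exact hab (h (fun i => if i.val = 0 then a0 else b0))
  -- Zorn 1 : a maximal consistent theory containing IdA
  set Tset : Set (Set (TT σ × TT σ)) :=
    {E | IsThy σ E ∧ IdA ⊆ E ∧ ((Term.var 0 : TT σ), (Term.var 1 : TT σ)) ∉ E} with hTset
  have hzorn1 : ∀ c ⊆ Tset, IsChain (· ⊆ ·) c → c.Nonempty →
      ∃ ub ∈ Tset, ∀ s ∈ c, s ⊆ ub := by
    intro c hcT hchain hcne
    refine ⟨⋃₀ c, ⟨⟨⟨?_, ?_, ?_, ?_⟩, ?_⟩, ?_, ?_⟩, fun s hs => Set.subset_sUnion_of_mem hs⟩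
    · intro u
      obtain ⟨E, hE⟩ := hcne
      exact ⟨E, hE, (hcT hE).1.1.1 u⟩
    · rintro u v ⟨E, hE, huv⟩
      exact ⟨E, hE, (hcT hE).1.1.2.1 _ _ huv⟩
    · rintro u v w ⟨E₁, hE₁, h1⟩ ⟨E₂, hE₂, h2⟩
      obtain ⟨E, hE, hs1, hs2⟩ := chain_pair hchain hE₁ hE₂
      exact ⟨E, hE, (hcT hE).1.1.2.2.1 _ _ _ (hs1 h1) (hs2 h2)⟩
    · intro f x y hxy
      choose g hgc hgm using hxy
      obtain ⟨E, hE, hsub⟩ := chain_fin hchain hcne g hgc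
      exact ⟨E, hE, (hcT hE).1.1.2.2.2 f x y (fun i => hsub i (hgm i))⟩
    · rintro τ u v ⟨E, hE, huv⟩
      exact ⟨E, hE, (hcT hE).1.2 τ _ _ huv⟩
    · intro z hz
      obtain ⟨E, hE⟩ := hcne
      exact ⟨E, hE, (hcT hE).2.1 hz⟩
    · rintro ⟨E, hE, hbad⟩
      exact (hcT hE).2.2 hbad
  obtain ⟨E, hIdAE, hEmax⟩ := zorn_subset_nonempty Tset hzorn1 IdA ⟨hIdThy, subset_rfl, hIdcons⟩
  obtain ⟨hEThy, hIdE, hEcons⟩ := hEmax.1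
  -- the distinguished pairs
  set q1 : TT σ × TT σ := (Term.var 0, cT) with hq1def
  set q2 : TT σ × TT σ := (Term.var 1, cT) with hq2def
  have hq1E : q1 ∉ E := by
    intro hq
    have h2 : ((Term.var 1 : TT σ), (cT : TT σ)) ∈ E := by
      have := hEThy.2 (fun _ => Term.var 1) _ _ hq
      rw [tsubst_cT] at this
      exact this
    exact hEcons (hEThy.1.2.2.1 _ _ _ hq (hEThy.1.2.1 _ _ h2))
  -- key pair q3 and the compactness property
  obtain ⟨q3, havoid, hkey⟩ : ∃ q3 : TT σ × TT σ,
      ¬(q1 ∈ E ∧ q2 ∈ E ∧ q3 ∈ E) ∧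
      ∀ Θ : Set (TT σ × TT σ), IsCon σ Θ → E ⊆ Θ → q1 ∈ Θ → q2 ∈ Θ → q3 ∈ Θ →
        ∀ u v : TT σ, (u, v) ∈ Θ := by
    have hchain0 : ∀ (Θ : Set (TT σ × TT σ)), IsCon σ Θ → q1 ∈ Θ → q2 ∈ Θ →
        ∀ w : TT σ, (w, tsubst (fun _ => (cT : TT σ)) w) ∈ Θ := by
      intro Θ hΘ h1 h2 w
      have hiv : ∀ i : Fin 2, ((Term.var i : TT σ), (cT : TT σ)) ∈ Θ := by
        intro i
        fin_cases i
        · exact h1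
        · exact h2
      have := tsubst_rel hΘ (τ₁ := Term.var) (τ₂ := fun _ => cT) hiv w
      rwa [tsubst_var] at this
    by_cases hcase : ∀ u v : TT σ,
        (tsubst (fun _ => (cT : TT σ)) u, tsubst (fun _ => (cT : TT σ)) v) ∈ E
    · refine ⟨q1, fun h => hq1E h.1, ?_⟩
      intro Θ hΘ hEΘ h1 h2 _ u v
      have hu := hchain0 Θ hΘ h1 h2 u
      have hv := hchain0 Θ hΘ h1 h2 v
      exact hΘ.2.2.1 _ _ _ hu (hΘ.2.2.1 _ _ _ (hEΘ (hcase u v)) (hΘ.2.1 _ _ hv))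
    · push_neg at hcase
      obtain ⟨u0, v0, h0⟩ := hcase
      set p : TT σ := tsubst (fun _ => (cT : TT σ)) u0 with hpdef
      set q : TT σ := tsubst (fun _ => (cT : TT σ)) v0 with hqdef
      refine ⟨(p, q), fun h => h0 h.2.2, ?_⟩
      intro Θ hΘ hEΘ h1 h2 h3 u v
      set D : Set (TT σ × TT σ) :=
        {z | ∀ Ψ : Set (TT σ × TT σ), IsCon σ Ψ → E ⊆ Ψ → (p, q) ∈ Ψ → z ∈ Ψ} with hDdef
      have hDcon : IsCon σ D := by
        refine ⟨fun u Ψ hΨ _ _ => hΨ.1 u,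
          fun u v h Ψ hΨ hE hpq => hΨ.2.1 _ _ (h Ψ hΨ hE hpq),
          fun u v w h h' Ψ hΨ hE hpq => hΨ.2.2.1 _ _ _ (h Ψ hΨ hE hpq) (h' Ψ hΨ hE hpq),
          fun f x y hxy Ψ hΨ hE hpq => hΨ.2.2.2 f x y (fun i => hxy i Ψ hΨ hE hpq)⟩
      have hDsubst : ∀ (τ : Fin 2 → TT σ) (u v : TT σ),
          (u, v) ∈ D → (tsubst τ u, tsubst τ v) ∈ D := by
        intro τ u v h Ψ hΨ hEΨ hpq
        set Ψ' : Set (TT σ × TT σ) := {z | (tsubst τ z.1, tsubst τ z.2) ∈ Ψ} with hΨ'def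
        have hΨ'c : IsCon σ Ψ' := by
          refine ⟨fun u => hΨ.1 _, fun a b h => hΨ.2.1 _ _ h,
            fun a b c h h' => hΨ.2.2.1 _ _ _ h h', ?_⟩
          intro f x y hxy
          show (tsubst τ (Term.op f x), tsubst τ (Term.op f y)) ∈ Ψ
          exact hΨ.2.2.2 f _ _ hxy
        have hE' : E ⊆ Ψ' := fun z hz => hEΨ (hEThy.2 τ _ _ hz)
        have hpq' : (p, q) ∈ Ψ' := by
          show (tsubst τ p, tsubst τ q) ∈ Ψ
          rw [hpdef, hqdef, tsubst_absorb, tsubst_absorb]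
          exact hpq
        exact h Ψ' hΨ'c hE' hpq'
      have hDE : E ⊆ D := fun z hz Ψ _ hE _ => hE hz
      have hpqD : (p, q) ∈ D := fun Ψ _ _ hpq => hpq
      have hx01 : ((Term.var 0 : TT σ), (Term.var 1 : TT σ)) ∈ D := by
        by_contra hno
        have hDT : D ∈ Tset := ⟨⟨hDcon, hDsubst⟩, hIdE.trans hDE, hno⟩
        have hDsubE : D ⊆ E := hEmax.2 hDT hDE
        exact h0 (hDsubE hpqD)
      have h2' := hDsubst (fun i => if i.val = 0 then p else q) _ _ hx01
      have hmemD : (p, q) ∈ D := hpqD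
      have hcc : (p, q) ∈ Θ := hmemD Θ hΘ hEΘ h3
      have hpu : (tsubst (fun _ => (cT : TT σ)) u, tsubst (fun _ => (cT : TT σ)) v) ∈ Θ := by
        have h3' := hDsubst
          (fun i => if i.val = 0 then tsubst (fun _ => (cT : TT σ)) u
            else tsubst (fun _ => (cT : TT σ)) v) _ _ hx01
        have := h3' Θ hΘ hEΘ h3
        simpa [tsubst] using this
      have hu := hchain0 Θ hΘ h1 h2 u
      have hv := hchain0 Θ hΘ h1 h2 v
      exact hΘ.2.2.1 _ _ _ hu (hΘ.2.2.1 _ _ _ hpu (hΘ.2.1 _ _ hv))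
  -- Zorn 2 : maximal congruence containing E and avoiding the triple
  set Cset : Set (Set (TT σ × TT σ)) :=
    {Θ | IsCon σ Θ ∧ E ⊆ Θ ∧ ¬(q1 ∈ Θ ∧ q2 ∈ Θ ∧ q3 ∈ Θ)} with hCset
  have hzorn2 : ∀ c ⊆ Cset, IsChain (· ⊆ ·) c → c.Nonempty →
      ∃ ub ∈ Cset, ∀ s ∈ c, s ⊆ ub := by
    intro c hcT hchain hcne
    refine ⟨⋃₀ c, ⟨⟨?_, ?_, ?_, ?_⟩, ?_, ?_⟩, fun s hs => Set.subset_sUnion_of_mem hs⟩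
    · intro u
      obtain ⟨Θ, hΘ⟩ := hcne
      exact ⟨Θ, hΘ, (hcT hΘ).1.1 u⟩
    · rintro u v ⟨Θ, hΘ, h⟩
      exact ⟨Θ, hΘ, (hcT hΘ).1.2.1 _ _ h⟩
    · rintro u v w ⟨Θ₁, h₁, hh1⟩ ⟨Θ₂, h₂, hh2⟩
      obtain ⟨Θ, hΘ, hs1, hs2⟩ := chain_pair hchain h₁ h₂
      exact ⟨Θ, hΘ, (hcT hΘ).1.2.2.1 _ _ _ (hs1 hh1) (hs2 hh2)⟩
    · intro f x y hxy
      choose g hgc hgm using hxy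
      obtain ⟨Θ, hΘ, hsub⟩ := chain_fin hchain hcne g hgc
      exact ⟨Θ, hΘ, (hcT hΘ).1.2.2.2 f x y (fun i => hsub i (hgm i))⟩
    · intro z hz
      obtain ⟨Θ, hΘ⟩ := hcne
      exact Set.subset_sUnion_of_mem hΘ ((hcT hΘ).2.1 hz)
    · rintro ⟨hq1u, hq2u, hq3u⟩
      obtain ⟨Θ₁, m1, i1⟩ := hq1u
      obtain ⟨Θ₂, m2, i2⟩ := hq2u
      obtain ⟨Θ₃, m3, i3⟩ := hq3u
      obtain ⟨Θ', hΘ', s1, s2⟩ := chain_pair hchain m1 m2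
      obtain ⟨Θ'', hΘ'', s3, s4⟩ := chain_pair hchain hΘ' m3
      exact (hcT hΘ'').2.2 ⟨s3 (s1 i1), s3 (s2 i2), s4 i3⟩
  obtain ⟨Θ, hEΘsub, hΘmax⟩ := zorn_subset_nonempty Cset hzorn2 E ⟨hEThy.1, subset_rfl, havoid⟩
  obtain ⟨hΘcon, hEΘ, hΘavoid⟩ := hΘmax.1
  refine ⟨redAlg (QAlg hΘcon), ?_, ?_, ?_, ?_⟩
  -- (1) membership in the variety of A
  · apply inVariety_of_ids
    intro s t hst
    have hIdmem : (tsubst (fun b => b.out) (upTerm s), tsubst (fun b => b.out) (upTerm t)) ∈ IdA := by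
      intro ν
      show A'.eval ν _ = A'.eval ν _
      exact (eval_tsubst A' _ ν _).trans ((eval_upTerm A' _ s).trans
        ((hst (fun b => A'.eval ν b.out)).trans
          ((eval_upTerm A' _ t).symm.trans (eval_tsubst A' _ ν _).symm)))
    have hmemΘ : (tsubst (fun b => b.out) (upTerm s), tsubst (fun b => b.out) (upTerm t)) ∈ Θ :=
      hEΘ (hIdE hIdmem)
    have hqe : Quotient.mk (conSetoid hΘcon) (tsubst (fun b => b.out) (upTerm s)) =
        Quotient.mk (conSetoid hΘcon) (tsubst (fun b => b.out) (upTerm t)) :=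
      Quotient.sound hmemΘ
    have e1 := qalg_eval hΘcon (fun b : Quotient (conSetoid hΘcon) => b.out) (upTerm s)
    have e2 := qalg_eval hΘcon (fun b : Quotient (conSetoid hΘcon) => b.out) (upTerm t)
    have hf : (fun b : Quotient (conSetoid hΘcon) =>
        Quotient.mk (conSetoid hΘcon) ((fun b : Quotient (conSetoid hΘcon) => b.out) b)) =
        fun b => b := funext Quotient.out_eq
    rw [hf] at e1 e2
    exact (eval_upTerm _ _ s).symm.trans (e1.trans (hqe.trans (e2.symm.trans (eval_upTerm _ _ t))))
  -- (2) finitely generated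
  · refine ⟨{Quotient.mk (conSetoid hΘcon) (Term.var 0),
      Quotient.mk (conSetoid hΘcon) (Term.var 1),
      Quotient.mk (conSetoid hΘcon) cT}, ?_, ?_⟩
    · exact ((Set.finite_singleton _).insert _).insert _
    · intro S hScl hXS
      have hall : ∀ tm : TT σ, Quotient.mk (conSetoid hΘcon) tm ∈ S := by
        intro tm
        induction tm with
        | var v =>
          fin_cases v
          · exact hXS (Set.mem_insert _ _)
          · exact hXS (Set.mem_insert_of_mem _ (Set.mem_insert _ _))
        | op f ts ih =>
          cases f with
          | inl g =>
            rw [← qmk_op hΘcon (Sum.inl g) ts]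
            exact hScl g _ ih
          | inr u =>
            rw [op_inr_eq_cT u ts]
            exact hXS (Set.mem_insert_of_mem _ (Set.mem_insert_of_mem _ (Set.mem_singleton _)))
      apply Set.eq_univ_of_forall
      intro x
      obtain ⟨tm, htm⟩ := Quot.exists_rep x
      exact htm ▸ hall tm
  -- (3) nontrivial
  · have hpair : ∃ pp : TT σ × TT σ, pp ∉ Θ := by
      by_contra hno
      push_neg at hno
      exact hΘavoid ⟨hno q1, hno q2, hno q3⟩
    obtain ⟨pp, hpp⟩ := hpair
    refine ⟨Quotient.mk (conSetoid hΘcon) pp.1, Quotient.mk (conSetoid hΘcon) pp.2, ?_⟩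
    intro hq
    exact hpp (Quotient.exact hq)
  -- (4) exactly two congruences
  · intro c hc
    by_cases hcel : ∀ x y, c x y ↔ x = y
    · exact Or.inl hcel
    · right
      push_neg at hcel
      obtain ⟨x, y, hxy⟩ := hcel
      obtain ⟨u, hu⟩ := Quot.exists_rep x
      obtain ⟨v, hv⟩ := Quot.exists_rep y
      subst hu
      subst hv
      rcases hxy with ⟨hcxy, hne⟩ | ⟨hncxy, heq⟩
      swap
      · exact absurd (heq ▸ hc.1.refl _) hncxy
      set Θ' : Set (TT σ × TT σ) :=
        {z | c (Quotient.mk (conSetoid hΘcon) z.1) (Quotient.mk (conSetoid hΘcon) z.2)}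
        with hΘ'def
      have hΘ'con : IsCon σ Θ' := by
        refine ⟨fun w => hc.1.refl _, fun a b h => hc.1.symm h,
          fun a b d h h' => hc.1.trans h h', ?_⟩
        intro f x' y' hxy'
        cases f with
        | inl g =>
          show c (Quotient.mk (conSetoid hΘcon) (Term.op (Sum.inl g) x'))
            (Quotient.mk (conSetoid hΘcon) (Term.op (Sum.inl g) y'))
          have h := hc.2 g (fun i => Quotient.mk (conSetoid hΘcon) (x' i))
            (fun i => Quotient.mk (conSetoid hΘcon) (y' i)) hxy'
          have e1 := qmk_op hΘcon (Sum.inl g) x'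
          have e2 := qmk_op hΘcon (Sum.inl g) y'
          exact (congrArg₂ c e1 e2).mp h
        | inr w =>
          show c (Quotient.mk (conSetoid hΘcon) (Term.op (Sum.inr w) x'))
            (Quotient.mk (conSetoid hΘcon) (Term.op (Sum.inr w) y'))
          rw [op_inr_eq_cT w x', op_inr_eq_cT w y']
          exact hc.1.refl _
      have hsub : Θ ⊆ Θ' := by
        intro z hz
        show c (Quotient.mk (conSetoid hΘcon) z.1) (Quotient.mk (conSetoid hΘcon) z.2)
        rw [Quotient.sound hz]
        exact hc.1.refl _
      have hEΘ' : E ⊆ Θ' := hEΘ.trans hsub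
      have hin : (u, v) ∈ Θ' := hcxy
      have h3 : q1 ∈ Θ' ∧ q2 ∈ Θ' ∧ q3 ∈ Θ' := by
        by_contra hno
        have hmem : Θ' ∈ Cset := ⟨hΘ'con, hEΘ', hno⟩
        have hsub' : Θ' ⊆ Θ := hΘmax.2 hmem hsub
        exact hne (Quotient.sound (hsub' hin))
      have hfull := hkey Θ' hΘ'con hEΘ' h3.1 h3.2.1 h3.2.2
      intro x' y'
      obtain ⟨u', hu'⟩ := Quot.exists_rep x'
      obtain ⟨v', hv'⟩ := Quot.exists_rep y'
      subst hu'
      subst hv'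
      exact hfull u' v'
end

section
/- For every natural number n there exists a variety in which every algebra generated by at most n elements is free, but some (n+1)-generated algebra is not free. Concretely: in the variety of sets-with-one-(n+1)-ary-semiprojection, every algebra of size ≤ n (hence every ≤ n-generated algebra, since the operations generate nothing new on small algebras) has s equal to first projection and is free, while there exist two non-isomorphic (n+1)-element algebras in the variety with no surjection between them in one direction, so not all (n+1)-generated algebras are free. -/
/-- The signature with one `(n+1)`-ary operation symbol. -/
def spSig (n : ℕ) : Signature := ⟨Unit, fun _ => n + 1⟩

/-- The variety of sets with one `(n+1)`-ary first-variable semiprojection: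
whenever two coordinates of the argument tuple coincide, the operation returns
the first coordinate. -/
def Ksp (n : ℕ) (A : Alg (spSig n)) : Prop :=
  ∀ x : Fin (n + 1) → A.carrier, (∃ i j, i ≠ j ∧ x i = x j) →
    A.interp Unit.unit x = x ⟨0, Nat.succ_pos n⟩

/-- `A` is a free algebra in the class `K` (over some set of free generators). -/
def IsFreeAlg {σ : Signature} (K : Alg σ → Prop) (A : Alg σ) : Prop :=
  ∃ (X : Type) (ι : X → A.carrier), IsFreeOn K A X ι

/-- Pigeonhole: a tuple of length `n+1` into a set of size `≤ n` has a repeat. -/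
lemma sp_pigeon {T : Type} (n : ℕ) (Y : Set T) (hY : Y.Finite) (hcard : Y.ncard ≤ n)
    (x : Fin (n + 1) → T) (hx : ∀ i, x i ∈ Y) :
    ∃ i j, i ≠ j ∧ x i = x j := by
  haveI := hY.fintype
  have hcard' : Fintype.card Y < Fintype.card (Fin (n + 1)) := by
    rw [Fintype.card_fin]
    have : Nat.card Y = Y.ncard := Nat.card_coe_set_eq Y
    rw [Nat.card_eq_fintype_card] at this
    omega
  obtain ⟨i, j, hij, he⟩ :=
    Fintype.exists_ne_map_eq_of_card_lt (fun i => (⟨x i, hx i⟩ : Y)) hcard'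
  exact ⟨i, j, hij, congrArg Subtype.val he⟩

/-- Part 1: an algebra in `Ksp n` generated by at most `n` elements is free. -/
lemma sp_part1 (n : ℕ) (A : Alg (spSig n)) (hA : Ksp n A)
    (h : ∃ X : Set A.carrier, X.Finite ∧ X.ncard ≤ n ∧ Generates A X) :
    IsFreeAlg (Ksp n) A := by
  obtain ⟨X, hfin, hcard, hgen⟩ := h
  -- X is closed under the operation
  have hclosed : ClosedUnder A X := by
    intro f x hx
    have hrep := sp_pigeon n X hfin hcard x hx
    cases f
    rw [hA x hrep]
    exact hx _
  have huniv : X = Set.univ := hgen X hclosed (by intro a _; exact ‹a ∈ X›)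
  have hall : ∀ a : A.carrier, a ∈ X := by rw [huniv]; intro a; trivial
  have hrepall : ∀ x : Fin (n + 1) → A.carrier, ∃ i j, i ≠ j ∧ x i = x j :=
    fun x => sp_pigeon n X hfin hcard x (fun i => hall (x i))
  have hproj : ∀ x : Fin (n + 1) → A.carrier,
      A.interp Unit.unit x = x ⟨0, Nat.succ_pos n⟩ := fun x => hA x (hrepall x)
  refine ⟨A.carrier, id, hA, ?_⟩
  intro B hB g
  refine ⟨⟨g, ?_⟩, fun x => rfl, ?_⟩
  · intro f x
    cases f
    have hrepB : ∃ i j, i ≠ j ∧ (g ∘ x) i = (g ∘ x) j := by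
      obtain ⟨i, j, hij, he⟩ := hrepall x
      exact ⟨i, j, hij, congrArg g he⟩
    rw [hproj x]
    exact (hB (g ∘ x) hrepB).symm
  · intro h hh
    cases h with
    | mk hf hm => simp only [Hom.mk.injEq]; funext a; exact hh a

/-- Part 2, case n = 0: the one-element mono-unary algebra is not free. -/
lemma sp_part2_zero :
    ∃ A : Alg (spSig 0), Ksp 0 A ∧
      (∃ X : Set A.carrier, X.Finite ∧ X.ncard ≤ 0 + 1 ∧ Generates A X) ∧
      ¬ IsFreeAlg (Ksp 0) A := by
  refine ⟨⟨Fin 1, fun _ x => x ⟨0, Nat.succ_pos 0⟩⟩, ?_, ?_, ?_⟩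
  · intro x _; rfl
  · refine ⟨Set.univ, Set.finite_univ, ?_, ?_⟩
    · rw [Set.ncard_univ, Nat.card_eq_fintype_card, Fintype.card_fin]
    · intro S _ hsub
      exact Set.univ_subset_iff.mp hsub
  · rintro ⟨X, ι, _, hfree⟩
    have hKB : Ksp 0 ⟨ℕ, fun _ x => x ⟨0, Nat.succ_pos 0⟩ + 1⟩ := by
      rintro x ⟨i, j, hij, -⟩
      exact absurd (Fin.ext (by omega : (i:ℕ) = j)) hij
    obtain ⟨h, -, -⟩ := hfree _ hKB (fun _ => (0 : ℕ))
    have := h.map Unit.unit (fun _ => ⟨0, Nat.succ_pos 0⟩)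
    simp only [Function.comp_apply] at this
    omega

/-- The `(n+1)`-element algebra whose operation is first projection except on
the identity tuple, where it returns the second element. -/
noncomputable def spA (n : ℕ) : Alg (spSig n) := by
  classical
  exact ⟨Fin (n + 1), fun _ x => if x = id then 1 else x ⟨0, Nat.succ_pos n⟩⟩

lemma sp_z01 {n : ℕ} (hn : 0 < n) : (⟨0, Nat.succ_pos n⟩ : Fin (n + 1)) ≠ 1 := by
  intro h
  have h2 := congrArg Fin.val h
  rw [Fin.val_one'] at h2
  rw [Nat.mod_eq_of_lt (show 1 < n + 1 by omega)] at h2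
  exact Nat.zero_ne_one h2

lemma spA_interp (n : ℕ) (f : Unit) (x : Fin (n + 1) → Fin (n + 1)) :
    (spA n).interp f x = if x = id then 1 else x ⟨0, Nat.succ_pos n⟩ := by
  cases f; simp [spA]; split_ifs <;> first | rfl | contradiction

lemma sp_KA (n : ℕ) : Ksp n (spA n) := by
  rintro x ⟨i, j, hij, he⟩
  erw [spA_interp n () x, if_neg]
  rintro rfl
  exact hij he

/-- Any self-map identifying 0 and 1 is an endomorphism of `spA n`. -/
lemma sp_endo {n : ℕ} (hn : 0 < n) (t : Fin (n + 1) → Fin (n + 1))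
    (ht : t ⟨0, Nat.succ_pos n⟩ = t 1) (f : Unit) (x : Fin (n + 1) → Fin (n + 1)) :
    t ((spA n).interp f x) = (spA n).interp f (t ∘ x) := by
  erw [spA_interp n f x, spA_interp n f (t ∘ x)]
  by_cases hx : x = id
  · subst hx
    rw [if_pos rfl]
    show t 1 = if t ∘ id = id then 1 else (t ∘ id) ⟨0, Nat.succ_pos n⟩
    have hne : ¬ (t ∘ id = id) := by
      intro h
      have : t = id := h
      subst this
      exact sp_z01 hn ht
    rw [if_neg hne]
    exact ht.symm
  · have hne : ¬ (t ∘ x = id) := by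
      intro hcomp
      have hxinj : Function.Injective x :=
        Function.Injective.of_comp (hcomp ▸ Function.injective_id)
      have hxsurj : Function.Surjective x := Finite.injective_iff_surjective.mp hxinj
      obtain ⟨a, ha⟩ := hxsurj ⟨0, Nat.succ_pos n⟩
      obtain ⟨b, hb⟩ := hxsurj 1
      have hab : t (x a) = t (x b) := by rw [ha, hb, ht]
      have hab2 : a = b := by
        have c1 := congrFun hcomp a
        have c2 := congrFun hcomp b
        simp only [Function.comp_apply, id_eq] at c1 c2
        rw [← c1, ← c2, hab]
      rw [hab2, hb] at ha
      exact sp_z01 hn ha.symm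
    rw [if_neg hx, if_neg hne]
    rfl


lemma sp_part2_pos (n : ℕ) (hn : 0 < n) :
    ∃ A : Alg (spSig n), Ksp n A ∧
      (∃ X : Set A.carrier, X.Finite ∧ X.ncard ≤ n + 1 ∧ Generates A X) ∧
      ¬ IsFreeAlg (Ksp n) A := by
  classical
  refine ⟨spA n, sp_KA n, ⟨Set.univ, ?_, ?_, ?_⟩, ?_⟩
  · exact @Set.finite_univ (Fin (n + 1)) _
  · show (Set.univ : Set (Fin (n + 1))).ncard ≤ n + 1
    rw [Set.ncard_univ, Nat.card_eq_fintype_card, Fintype.card_fin]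
  · intro S _ hsub
    exact Set.univ_subset_iff.mp hsub
  · rintro ⟨X, ι, -, hfree⟩
    by_cases h0 : (⟨0, Nat.succ_pos n⟩ : Fin (n + 1)) ∈ Set.range ι
    · by_cases h1 : (1 : Fin (n + 1)) ∈ Set.range ι
      · -- both 0 and 1 are in the range of ι: use the projection algebra
        have hKB : Ksp n ⟨Fin (n + 1), fun _ x => x ⟨0, Nat.succ_pos n⟩⟩ :=
          fun x _ => rfl
        obtain ⟨h, hh, -⟩ := hfree _ hKB ι
        obtain ⟨x0, hx0⟩ := h0
        obtain ⟨x1, hx1⟩ := h1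
        have e0 : h.toFun ⟨0, Nat.succ_pos n⟩ = ⟨0, Nat.succ_pos n⟩ := by
          rw [← hx0]; exact hh x0
        have e1 : h.toFun (1 : Fin (n + 1)) = (1 : Fin (n + 1)) := by
          rw [← hx1]; exact hh x1
        have hm := h.map Unit.unit id
        erw [spA_interp n () id, if_pos rfl] at hm
        have hcon : h.toFun (1 : Fin (n + 1)) = h.toFun ⟨0, Nat.succ_pos n⟩ := hm
        rw [e0, e1] at hcon
        exact sp_z01 hn hcon.symm
      · -- 1 is not in the range of ι
        have hone : (1 : Fin (n + 1)) ≠ ⟨0, Nat.succ_pos n⟩ :=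
          fun he => sp_z01 hn he.symm
        set t : Fin (n + 1) → Fin (n + 1) :=
          Function.update id (1 : Fin (n + 1)) ⟨0, Nat.succ_pos n⟩ with hts
        have ht1 : t 1 = ⟨0, Nat.succ_pos n⟩ := Function.update_self _ _ _
        have htne : ∀ b : Fin (n + 1), b ≠ 1 → t b = b := by
          intro b hb
          rw [hts, Function.update_of_ne hb]
          rfl
        have ht : t ⟨0, Nat.succ_pos n⟩ = t 1 := by
          rw [ht1, htne _ (sp_z01 hn)]
        obtain ⟨h, hh, huniq⟩ := hfree (spA n) (sp_KA n) ι
        have e1 := huniq (Hom.mk (id : Fin (n+1) → Fin (n+1)) (fun f x => rfl))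
          (fun x => rfl)
        have e2 := huniq (Hom.mk t (sp_endo hn t ht))
          (fun x => htne (ι x) (fun he => h1 ⟨x, he⟩))
        have e3 : (id : Fin (n+1) → Fin (n+1)) = t :=
          congrArg Hom.toFun (e1.trans e2.symm)
        have e4 := congrFun e3 (1 : Fin (n + 1))
        rw [ht1] at e4
        simp only [id_eq] at e4
        exact hone e4
    · -- 0 is not in the range of ι
      have hone : (1 : Fin (n + 1)) ≠ ⟨0, Nat.succ_pos n⟩ :=
        fun he => sp_z01 hn he.symm
      set t : Fin (n + 1) → Fin (n + 1) :=
        Function.update id ⟨0, Nat.succ_pos n⟩ (1 : Fin (n + 1)) with hts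
      have ht1 : t ⟨0, Nat.succ_pos n⟩ = 1 := Function.update_self _ _ _
      have htne : ∀ b : Fin (n + 1), b ≠ ⟨0, Nat.succ_pos n⟩ → t b = b := by
        intro b hb
        rw [hts, Function.update_of_ne hb]
        rfl
      have ht : t ⟨0, Nat.succ_pos n⟩ = t 1 := by
        rw [ht1, htne _ hone]
      obtain ⟨h, hh, huniq⟩ := hfree (spA n) (sp_KA n) ι
      have e1 := huniq (Hom.mk (id : Fin (n+1) → Fin (n+1)) (fun f x => rfl))
        (fun x => rfl)
      have e2 := huniq (Hom.mk t (sp_endo hn t ht))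
        (fun x => htne (ι x) (fun he => h0 ⟨x, he⟩))
      have e3 : (id : Fin (n+1) → Fin (n+1)) = t :=
        congrArg Hom.toFun (e1.trans e2.symm)
      have e4 := congrFun e3 ⟨0, Nat.succ_pos n⟩
      rw [ht1] at e4
      simp only [id_eq] at e4
      exact sp_z01 hn e4

/-- for every natural number `n`, in the variety of sets with one
`(n+1)`-ary first-variable semiprojection, every algebra generated by at most `n`
elements is free, but some algebra generated by `n+1` elements is not free. -/
theorem stmt_18 (n : ℕ) :
    (∀ A : Alg (spSig n), Ksp n A →
      (∃ X : Set A.carrier, X.Finite ∧ X.ncard ≤ n ∧ Generates A X) →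
      IsFreeAlg (Ksp n) A) ∧
    (∃ A : Alg (spSig n), Ksp n A ∧
      (∃ X : Set A.carrier, X.Finite ∧ X.ncard ≤ n + 1 ∧ Generates A X) ∧
      ¬ IsFreeAlg (Ksp n) A) := by
  refine ⟨fun A hA h => sp_part1 n A hA h, ?_⟩
  rcases Nat.eq_zero_or_pos n with rfl | hn
  · exact sp_part2_zero
  · exact sp_part2_pos n hn
end
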